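/- Let A be a highly non-singular r×s matrix over ℚ (with s ≥ r ≥ 1) and suppose some column of A contains exactly one non-zero entry, located in row i₀. Then the (r-1)×(s-1) matrix obtained from A by deleting that column and deleting row i₀ is also highly non-singular. -/
import Mathlib


/-- An `r × s` matrix over `ℚ` (with `s ≥ r`) is *highly non-singular* if every
`r × r` submatrix formed by choosing `r` of its columns is non-singular. -/
def HighlyNonSingular {r s : ℕ} (A : Matrix (Fin r) (Fin s) ℚ) : Prop :=
  ∀ c : Fin r → Fin s, Function.Injective c → (A.submatrix id c).det ≠ 0

/-- Lemma 2.1 (i)(c): if `A` is a highly non-singular `(r+1) × (s+1)` matrix (so of format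
`r' × s'` with `s' ≥ r' ≥ 1`) and the column `j₀` of `A` has exactly one non-zero entry,
located in row `i₀`, then the matrix obtained from `A` by deleting column `j₀` and row `i₀`
is also highly non-singular. -/
theorem highlyNonSingular_delete_row_and_column (r s : ℕ) (hrs : r ≤ s)
    (A : Matrix (Fin (r + 1)) (Fin (s + 1)) ℚ) (hA : HighlyNonSingular A)
    (i₀ : Fin (r + 1)) (j₀ : Fin (s + 1))
    (hnz : A i₀ j₀ ≠ 0) (hz : ∀ i, i ≠ i₀ → A i j₀ = 0) :
    HighlyNonSingular (A.submatrix i₀.succAbove j₀.succAbove) := by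
  intro c hc
  have hdinj : Function.Injective (Fin.cons j₀ (j₀.succAbove ∘ c) :
      Fin (r + 1) → Fin (s + 1)) := by
    rw [Fin.cons_injective_iff]
    constructor
    · rintro ⟨k, hk⟩
      exact Fin.succAbove_ne j₀ (c k) hk
    · exact Fin.succAbove_right_injective.comp hc
  have h := hA _ hdinj
  rw [Matrix.det_succ_column_zero] at h
  rw [Fintype.sum_eq_single i₀ (fun i hi => by
    simp [Matrix.submatrix_apply, hz i hi])] at h
  intro h0
  apply h
  have hcomp : ((Fin.cons j₀ (j₀.succAbove ∘ c) : Fin (r + 1) → Fin (s + 1)) ∘ Fin.succ)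
      = j₀.succAbove ∘ c := by
    funext k
    simp
  rw [Matrix.submatrix_submatrix, Function.id_comp, hcomp]
  rw [Matrix.submatrix_apply]
  simp only [Fin.cons_zero, id]
  rw [Matrix.submatrix_submatrix, Function.comp_id] at h0
  rw [h0, mul_zero]
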